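/- arXiv:2002.07948 — 2 statements merged into one kernel-verified Lean document; each statement's English description precedes it below -/
import Mathlib

section
/- Let F(w) := f(w − α∇f(w)). Then for every α ∈ [0, 1/L], F is differentiable with ∇F(w) = (I − α∇²f(w)) ∇f(w − α∇f(w)), and ∇F is Lipschitz continuous with constant L_F := 4L + αρB, i.e., ‖∇F(w) − ∇F(u)‖ ≤ (4L + αρB)‖w − u‖ for all w, u ∈ ℝ^d. -/
/-!
By the chain rule `∇F w = (I - α ∇²f w)† ∇f (w - α ∇f w)`, and the adjoint can be dropped because
the Hessian of a `C²` function is symmetric. Writing `∇F w = A w (b w)` with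
`A w = I - α ∇²f w` and `b w = ∇f (w - α ∇f w)`, we have `‖A w‖ ≤ 1 + αL ≤ 2`, `A` is
`αρ`-Lipschitz, `‖b w‖ ≤ B` and `b` is `L (1 + αL) ≤ 2L`-Lipschitz; the product rule
`‖A w (b w) - A u (b u)‖ ≤ (‖A‖ Lip b + Lip A ‖b‖) ‖w - u‖` then gives `4L + αρB`.
-/

open InnerProductSpace

section Lipschitz

variable {X E F : Type*} [SeminormedAddCommGroup X] [NormedAddCommGroup E] [NormedSpace ℝ E]
  [NormedAddCommGroup F] [NormedSpace ℝ F]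

theorem norm_sub_smul_sub_le {G : E → E} {L α : ℝ} (hG : ∀ w u, ‖G w - G u‖ ≤ L * ‖w - u‖)
    (hα : 0 ≤ α) (w u : E) :
    ‖(w - α • G w) - (u - α • G u)‖ ≤ (1 + α * L) * ‖w - u‖ :=
  calc ‖(w - α • G w) - (u - α • G u)‖ = ‖(w - u) - α • (G w - G u)‖ := by
        rw [smul_sub, sub_sub_sub_comm]
    _ ≤ ‖w - u‖ + α * (L * ‖w - u‖) := by
        grw [norm_sub_le, norm_smul, Real.norm_of_nonneg hα, hG]
    _ = (1 + α * L) * ‖w - u‖ := by ring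

theorem norm_id_sub_smul_le {H : E →L[ℝ] E} {L α : ℝ} (hH : ‖H‖ ≤ L) (hα : 0 ≤ α) :
    ‖ContinuousLinearMap.id ℝ E - α • H‖ ≤ 1 + α * L := by
  grw [norm_sub_le, ContinuousLinearMap.norm_id_le, norm_smul, Real.norm_of_nonneg hα, hH]

theorem norm_apply_sub_apply_le {A : X → E →L[ℝ] F} {b : X → E} {a KA B Kb : ℝ}
    (hA : ∀ w, ‖A w‖ ≤ a) (hA_lip : ∀ w u, ‖A w - A u‖ ≤ KA * ‖w - u‖)
    (hb : ∀ w, ‖b w‖ ≤ B) (hb_lip : ∀ w u, ‖b w - b u‖ ≤ Kb * ‖w - u‖) (w u : X) :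
    ‖A w (b w) - A u (b u)‖ ≤ (a * Kb + KA * B) * ‖w - u‖ := by
  have ha : 0 ≤ a := (norm_nonneg _).trans (hA w)
  have hKA : 0 ≤ KA * ‖w - u‖ := (norm_nonneg _).trans (hA_lip w u)
  calc ‖A w (b w) - A u (b u)‖ = ‖A w (b w - b u) + (A w - A u) (b u)‖ := by
        rw [map_sub, sub_apply, sub_add_sub_cancel]
    _ ≤ ‖A w‖ * ‖b w - b u‖ + ‖A w - A u‖ * ‖b u‖ :=
        (norm_add_le _ _).trans
          (add_le_add (ContinuousLinearMap.le_opNorm _ _) (ContinuousLinearMap.le_opNorm _ _))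
    _ ≤ a * (Kb * ‖w - u‖) + KA * ‖w - u‖ * B := by
        grw [hA w, hb_lip w u, hA_lip w u, hb u]
    _ = (a * Kb + KA * B) * ‖w - u‖ := by ring

end Lipschitz

section Hilbert

variable {E : Type*} [NormedAddCommGroup E] [InnerProductSpace ℝ E] [CompleteSpace E]

theorem HasGradientAt.comp_hasFDerivAt {f : E → ℝ} {g : E → E} {a : E} {T : E →L[ℝ] E} {w : E}
    (hf : HasGradientAt f a (g w)) (hg : HasFDerivAt g T w) :
    HasGradientAt (f ∘ g) (T.adjoint a) w := by
  rw [hasGradientAt_iff_hasFDerivAt] at hf ⊢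
  refine (hf.comp w hg).congr_fderiv ?_
  ext x
  simp [ContinuousLinearMap.adjoint_inner_left]

theorem ContDiff.gradient {f : E → ℝ} {n : WithTop ℕ∞} (hf : ContDiff ℝ (n + 1) f) :
    ContDiff ℝ n (gradient f) :=
  (toDual ℝ E).symm.contDiff.comp (hf.fderiv_right le_rfl)

theorem fderiv_gradient_apply (f : E → ℝ) (w a : E) :
    fderiv ℝ (gradient f) w a = (toDual ℝ E).symm (fderiv ℝ (fderiv ℝ f) w a) := by
  rw [show gradient f = (toDual ℝ E).symm ∘ fderiv ℝ f from rfl, LinearIsometryEquiv.comp_fderiv]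
  rfl

theorem ContDiffAt.isSelfAdjoint_fderiv_gradient {f : E → ℝ} {w : E} (hf : ContDiffAt ℝ 2 f w) :
    IsSelfAdjoint (fderiv ℝ (gradient f) w) := by
  have hsymm := hf.isSymmSndFDerivAt (by simp [minSmoothness_of_isRCLikeNormedField])
  rw [ContinuousLinearMap.isSelfAdjoint_iff_isSymmetric]
  intro a b
  rw [ContinuousLinearMap.coe_coe, fderiv_gradient_apply,
    fderiv_gradient_apply, toDual_symm_apply, real_inner_comm, toDual_symm_apply, hsymm.eq]

theorem hasGradientAt_comp_sub_smul_gradient {f : E → ℝ} (hf : ContDiff ℝ 2 f) (α : ℝ) (w : E) :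
    HasGradientAt (fun v => f (v - α • gradient f v))
      ((ContinuousLinearMap.id ℝ E - α • fderiv ℝ (gradient f) w)
        (gradient f (w - α • gradient f w))) w := by
  have hstep : HasFDerivAt (fun v => v - α • gradient f v)
      (ContinuousLinearMap.id ℝ E - α • fderiv ℝ (gradient f) w) w :=
    (hasFDerivAt_id w).sub
      (((hf.gradient (n := 1)).differentiable one_ne_zero w).hasFDerivAt.const_smul α)
  have hself : IsSelfAdjoint (ContinuousLinearMap.id ℝ E - α • fderiv ℝ (gradient f) w) :=
    (IsSelfAdjoint.one _).sub
      ((IsSelfAdjoint.all α).smul hf.contDiffAt.isSelfAdjoint_fderiv_gradient)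
  simpa only [hself.adjoint_eq, Function.comp_def] using
    ((hf.differentiable two_ne_zero) _).hasGradientAt.comp_hasFDerivAt hstep

theorem norm_gradient_comp_sub_smul_gradient_sub_le {f : E → ℝ} {L B ρ α : ℝ}
    (hf : ContDiff ℝ 2 f) (hL : 0 ≤ L)
    (hsmooth : ∀ w u, ‖gradient f w - gradient f u‖ ≤ L * ‖w - u‖)
    (hB : ∀ w, ‖gradient f w‖ ≤ B)
    (hρ : ∀ w u, ‖fderiv ℝ (gradient f) w - fderiv ℝ (gradient f) u‖ ≤ ρ * ‖w - u‖)
    (hα : 0 ≤ α) (w u : E) :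
    ‖gradient (fun v => f (v - α • gradient f v)) w -
        gradient (fun v => f (v - α • gradient f v)) u‖ ≤
      ((1 + α * L) * (L * (1 + α * L)) + α * ρ * B) * ‖w - u‖ := by
  have hH w : ‖fderiv ℝ (gradient f) w‖ ≤ L :=
    norm_fderiv_le_of_lip' ℝ hL (.of_forall fun v => hsmooth v w)
  have hH_lip w u : ‖(ContinuousLinearMap.id ℝ E - α • fderiv ℝ (gradient f) w) -
      (ContinuousLinearMap.id ℝ E - α • fderiv ℝ (gradient f) u)‖ ≤ α * ρ * ‖w - u‖ :=
    calc _ = ‖α • (fderiv ℝ (gradient f) w - fderiv ℝ (gradient f) u)‖ := by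
          rw [sub_sub_sub_cancel_left, norm_sub_rev, smul_sub]
      _ ≤ α * (ρ * ‖w - u‖) := by grw [norm_smul, Real.norm_of_nonneg hα, hρ w u]
      _ = α * ρ * ‖w - u‖ := (mul_assoc _ _ _).symm
  have hstep_lip w u :
      ‖gradient f (w - α • gradient f w) - gradient f (u - α • gradient f u)‖ ≤
        L * (1 + α * L) * ‖w - u‖ := by
    grw [hsmooth, mul_assoc, norm_sub_smul_sub_le hsmooth hα]
  have hgrad := hasGradientAt_comp_sub_smul_gradient hf α
  rw [(hgrad w).gradient, (hgrad u).gradient]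
  exact norm_apply_sub_apply_le (b := fun v => gradient f (v - α • gradient f v))
    (fun w => norm_id_sub_smul_le (hH w) hα) hH_lip (fun _ => hB _) hstep_lip w u

end Hilbert

/-- Let `f : ℝ^d → ℝ` be twice continuously differentiable, `L`-smooth, with gradient
bounded by `B` and Hessian `ρ`-Lipschitz (operator norm).  Let `F w := f (w - α∇f w)`.
Then for every `α ∈ [0, 1/L]`, `F` is differentiable with
`∇F w = (I - α ∇²f w) (∇f (w - α ∇f w))`, and `∇F` is Lipschitz with constant
`L_F := 4L + αρB`. -/
theorem stmt_0 {d : ℕ} (f : EuclideanSpace ℝ (Fin d) → ℝ) (L B ρ α : ℝ)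
    (hf : ContDiff ℝ 2 f)
    (hsmooth : ∀ w u, ‖gradient f w - gradient f u‖ ≤ L * ‖w - u‖)
    (hB : ∀ w, ‖gradient f w‖ ≤ B)
    (hρ : ∀ w u, ‖fderiv ℝ (gradient f) w - fderiv ℝ (gradient f) u‖ ≤ ρ * ‖w - u‖)
    (hα0 : 0 ≤ α) (hαL : α ≤ 1 / L) :
    (∀ w : EuclideanSpace ℝ (Fin d),
      HasGradientAt (fun v => f (v - α • gradient f v))
        ((ContinuousLinearMap.id ℝ (EuclideanSpace ℝ (Fin d)) - α • fderiv ℝ (gradient f) w)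
          (gradient f (w - α • gradient f w))) w) ∧
    (∀ w u : EuclideanSpace ℝ (Fin d),
      ‖gradient (fun v => f (v - α • gradient f v)) w -
        gradient (fun v => f (v - α • gradient f v)) u‖ ≤ (4 * L + α * ρ * B) * ‖w - u‖) := by
  have hL : 0 ≤ L := by
    by_contra! hL
    linarith [one_div_neg.mpr hL]
  have hαL1 : α * L ≤ 1 := by
    rcases hL.eq_or_lt with rfl | hL
    · simp
    · rwa [le_div_iff₀ hL] at hαL
  refine ⟨hasGradientAt_comp_sub_smul_gradient hf α, fun w u => ?_⟩
  calc _ ≤ ((1 + α * L) * (L * (1 + α * L)) + α * ρ * B) * ‖w - u‖ :=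
        norm_gradient_comp_sub_smul_gradient_sub_le hf hL hsmooth hB hρ hα0 w u
    _ ≤ (4 * L + α * ρ * B) * ‖w - u‖ := by
        gcongr ?_ * _
        have : 0 ≤ α * L := mul_nonneg hα0 hL
        nlinarith [mul_nonneg (mul_nonneg hL (sub_nonneg.2 hαL1)) (by linarith : 0 ≤ 3 + α * L)]
end

section
/- For every α ∈ [0, 1/L] and every w ∈ ℝ^d, (1/n)∑_{i=1}^n ‖∇f_i(w − α∇f_i(w)) − ∇f(w − α∇f(w))‖² ≤ 2(1 + (αL)²)·2γ_G² ≤ 8γ_G². -/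
/-- If each `f_i` is differentiable and `L`-smooth, `f := (1/n) ∑ f_i`, and the gradient
dissimilarity is bounded by `γ_G²`, then for every `α ∈ [0, 1/L]` and `w`,
`(1/n) ∑ᵢ ‖∇f_i(w - α∇f_i w) - ∇f(w - α∇f w)‖² ≤ 2(1 + (αL)²)·2γ_G² ≤ 8γ_G²`. -/
theorem stmt_11 {d n : ℕ} (hn : 0 < n) (f : Fin n → EuclideanSpace ℝ (Fin d) → ℝ)
    (L γG α : ℝ)
    (hdiff : ∀ i, Differentiable ℝ (f i))
    (hsmooth : ∀ i w u, ‖gradient (f i) w - gradient (f i) u‖ ≤ L * ‖w - u‖)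
    (hG : ∀ w, (1 / n : ℝ) * ∑ i, ‖gradient (f i) w -
        gradient (fun v => (1 / n : ℝ) * ∑ j, f j v) w‖ ^ 2 ≤ γG ^ 2)
    (hα0 : 0 ≤ α) (hαL : α ≤ 1 / L) :
    ∀ w : EuclideanSpace ℝ (Fin d),
      (1 / n : ℝ) * ∑ i, ‖gradient (f i) (w - α • gradient (f i) w) -
          gradient (fun v => (1 / n : ℝ) * ∑ j, f j v)
            (w - α • gradient (fun v => (1 / n : ℝ) * ∑ j, f j v) w)‖ ^ 2 ≤
        2 * (1 + (α * L) ^ 2) * (2 * γG ^ 2) ∧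
      2 * (1 + (α * L) ^ 2) * (2 * γG ^ 2) ≤ 8 * γG ^ 2 := by
  -- first establish 0 ≤ α * L ≤ 1
  have hγ : (0:ℝ) ≤ γG ^ 2 := sq_nonneg _
  have hαL1 : α * L ≤ 1 ∧ 0 ≤ α * L := by
    rcases lt_trichotomy L 0 with hL | hL | hL
    · have : (1:ℝ)/L < 0 := div_neg_of_pos_of_neg one_pos hL
      linarith
    · simp [hL]
    · exact ⟨(le_div_iff₀ hL).mp hαL, mul_nonneg hα0 hL.le⟩
  intro w
  constructor
  · set F := fun v => (1 / n : ℝ) * ∑ j, f j v with hF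
    set y := w - α • gradient F w with hy
    -- per-term bound
    have key : ∀ i, ‖gradient (f i) (w - α • gradient (f i) w) - gradient F y‖ ^ 2 ≤
        2 * (α*L)^2 * ‖gradient (f i) w - gradient F w‖ ^ 2
        + 2 * ‖gradient (f i) y - gradient F y‖ ^ 2 := by
      intro i
      set x := w - α • gradient (f i) w with hx
      have hxy : x - y = α • (gradient F w - gradient (f i) w) := by
        rw [hx, hy]; module
      have hnxy : ‖x - y‖ = α * ‖gradient (f i) w - gradient F w‖ := by
        rw [hxy, norm_smul, Real.norm_eq_abs, abs_of_nonneg hα0, norm_sub_rev]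
      have h1 : ‖gradient (f i) x - gradient (f i) y‖ ≤
          α * L * ‖gradient (f i) w - gradient F w‖ := by
        have := hsmooth i x y
        rw [hnxy] at this
        linarith [this]
      have h2 : ‖gradient (f i) x - gradient F y‖ ≤
          ‖gradient (f i) x - gradient (f i) y‖ + ‖gradient (f i) y - gradient F y‖ :=
        norm_sub_le_norm_sub_add_norm_sub _ _ _
      have h3 := norm_nonneg (gradient (f i) x - gradient F y)
      have h4 := norm_nonneg (gradient (f i) x - gradient (f i) y)
      have h5 := norm_nonneg (gradient (f i) y - gradient F y)
      nlinarith [sq_nonneg (‖gradient (f i) x - gradient (f i) y‖ - ‖gradient (f i) y - gradient F y‖)]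
    have hsum : (1 / n : ℝ) * ∑ i, ‖gradient (f i) (w - α • gradient (f i) w) -
        gradient F y‖ ^ 2 ≤
        2 * (α*L)^2 * ((1/n:ℝ) * ∑ i, ‖gradient (f i) w - gradient F w‖ ^ 2)
        + 2 * ((1/n:ℝ) * ∑ i, ‖gradient (f i) y - gradient F y‖ ^ 2) := by
      have hnn : (0:ℝ) ≤ 1 / n := by positivity
      have := Finset.sum_le_sum (s := Finset.univ) (fun i _ => key i)
      rw [Finset.sum_add_distrib, ← Finset.mul_sum, ← Finset.mul_sum] at this
      have := mul_le_mul_of_nonneg_left this hnn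
      linarith [this]
    have hGw := hG w
    have hGy := hG y
    nlinarith [sq_nonneg (α*L), hsum, hGw, hGy, hγ]
  · nlinarith [mul_le_mul hαL1.1 hαL1.1 hαL1.2 zero_le_one, hγ]
end
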